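/- Let A be a Banach algebra with unit, H : ℝ → A continuous, t ≥ 0, and n_1, n_2 ≥ 1 with n = n_1 + n_2. Then the product of two iterated simplex integrals satisfies H_{n_1}(t)·H_{n_2}(t) = Σ_{σ ∈ S_n, Desc(σ) ⊆ {n_1}} H_σ(t); that is, H_{n_1} H_{n_2} = H_{D_{\{n_1\}}^{(n)}}. -/

import Mathlib

open MeasureTheory

open Classical in
/-- The descent set of a permutation `σ ∈ S_n` (1-based convention):
`Desc(σ) = {i ∈ {1,…,n−1} : σ(i) > σ(i+1)}`. -/
noncomputable def descSet {n : ℕ} (σ : Equiv.Perm (Fin n)) : Finset ℕ :=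
  (Finset.Ioo 0 n).filter
    (fun i => ∃ h : i < n, σ ⟨i, h⟩ < σ ⟨i - 1, lt_of_le_of_lt (Nat.sub_le i 1) h⟩)

/-- The simplex `Δ_t^n = {0 ≤ t₁ ≤ ⋯ ≤ tₙ ≤ t}` inside `Fin n → ℝ`. -/
def simplex (n : ℕ) (t : ℝ) : Set (Fin n → ℝ) :=
  {u | (∀ i, 0 ≤ u i ∧ u i ≤ t) ∧ ∀ i j, i ≤ j → u i ≤ u j}

variable {A : Type*} [NormedRing A] [NormedAlgebra ℝ A] [CompleteSpace A]

/-- The iterated integral `H_σ(t) = ∫_{Δ_t^n} H(t_{σ(1)})⋯H(t_{σ(n)}) dt₁⋯dtₙ`. -/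
noncomputable def Hperm (H : ℝ → A) {n : ℕ} (σ : Equiv.Perm (Fin n)) (t : ℝ) : A :=
  ∫ u in simplex n t, (List.ofFn (fun j => H (u (σ j)))).prod

/-- `H_n(t) = ∫_{Δ_t^n} H(t₁)⋯H(tₙ) dt₁⋯dtₙ`, with `H_0(t) = 1`. -/
noncomputable def Hn (H : ℝ → A) : ℕ → ℝ → A
  | 0, _ => 1
  | (n + 1), t => Hperm H (1 : Equiv.Perm (Fin (n + 1))) t

/-- The iterated integral evaluated on the Dynkin element:
`H_{𝒟_m}(t) = Σ_{j=0}^{m-1} (-1)^j H_{D_{={1,…,j}}^{(m)}}(t)`. -/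
noncomputable def HDyn (H : ℝ → A) (m : ℕ) (t : ℝ) : A :=
  ∑ j ∈ Finset.range m, (-1 : ℝ) ^ j •
    ∑ σ ∈ Finset.univ.filter
        (fun σ : Equiv.Perm (Fin m) => descSet σ = Finset.Icc 1 j),
      Hperm H σ t

/-! Gluing the two simplices, `H_{n₁}(t) H_{n₂}(t)` becomes the integral of `H(w₁)⋯H(wₙ)` over
the tuples `w ∈ [0,t]ⁿ` that increase on each of the blocks `{1,…,n₁}` and `{n₁+1,…,n}`. Off the
null set of tuples with a repeated coordinate, such a `w` has `w ∘ σ⁻¹` increasing for exactly one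
permutation `σ`, and the permutations arising in this way are those increasing on both blocks,
i.e. those with `Desc(σ) ⊆ {n₁}`. Permuting coordinates turns the integral over
`{w | w ∘ σ⁻¹ increasing}` into `H_σ(t)`. -/

section OrderedProd

variable {α M : Type*} [Monoid M]

noncomputable def orderedProd (H : α → M) {n : ℕ} (w : Fin n → α) : M :=
  (List.ofFn fun j => H (w j)).prod

theorem orderedProd_append (H : α → M) {m n : ℕ} (u : Fin m → α) (v : Fin n → α) :
    orderedProd H (Fin.append u v) = orderedProd H u * orderedProd H v := by
  simp [orderedProd, List.ofFn_add]

theorem continuous_orderedProd [TopologicalSpace α] [TopologicalSpace M] [ContinuousMul M]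
    {H : α → M} (hH : Continuous H) (n : ℕ) : Continuous (orderedProd H (n := n)) := by
  show Continuous fun w : Fin n → α => (List.ofFn fun j => H (w j)).prod
  simp only [List.ofFn_eq_map]
  exact continuous_list_prod _ fun i _ => hH.comp (continuous_apply i)

end OrderedProd

theorem simplex_eq (n : ℕ) (t : ℝ) :
    simplex n t = Set.Icc 0 (fun _ => t) ∩ {u | Monotone u} := by
  ext u
  simp [simplex, Set.mem_Icc, Pi.le_def, forall_and, Monotone]

theorem isClosed_simplex (n : ℕ) (t : ℝ) : IsClosed (simplex n t) := by
  rw [simplex_eq]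
  exact isClosed_Icc.inter isClosed_monotone

theorem simplex_subset_Icc (n : ℕ) (t : ℝ) : simplex n t ⊆ Set.Icc 0 (fun _ => t) :=
  simplex_eq n t ▸ Set.inter_subset_left

theorem comp_mem_simplex {m n : ℕ} {t : ℝ} {u : Fin n → ℝ} (hu : u ∈ simplex n t)
    {f : Fin m → Fin n} (hf : Monotone f) : u ∘ f ∈ simplex m t :=
  ⟨fun i => hu.1 (f i), fun _ _ hij => hu.2 _ _ (hf hij)⟩

section Descents

variable {n : ℕ} {σ : Equiv.Perm (Fin n)}

theorem coe_mem_descSet_iff {a b : Fin n} (hab : (b : ℕ) = a + 1) :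
    (b : ℕ) ∈ descSet σ ↔ σ b < σ a := by
  have ha : (⟨(b : ℕ) - 1, by omega⟩ : Fin n) = a := Fin.ext (by simp; omega)
  simp only [descSet, Finset.mem_filter, Finset.mem_Ioo, Fin.is_lt, and_true, Fin.eta, ha,
    exists_const]
  exact and_iff_right_of_imp fun _ => by omega

theorem lt_of_coe_notMem_descSet {a b : Fin n} (hab : (b : ℕ) = a + 1)
    (h : (b : ℕ) ∉ descSet σ) : σ a < σ b :=
  lt_of_le_of_ne (not_lt.mp ((coe_mem_descSet_iff hab).not.mp h))
    (σ.injective.ne (Fin.ne_of_val_ne (by omega)))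

theorem strictMono_comp_of_notMem_descSet {m : ℕ} {f : Fin m → Fin n}
    (hf : ∀ i j : Fin m, (j : ℕ) = i + 1 → (f j : ℕ) = f i + 1 ∧ (f j : ℕ) ∉ descSet σ) :
    StrictMono (σ ∘ f) := by
  cases m with
  | zero => exact fun a => a.elim0
  | succ m =>
    refine Fin.strictMono_iff_lt_succ.2 fun i => ?_
    obtain ⟨hsucc, hdesc⟩ := hf i.castSucc i.succ (by simp)
    exact lt_of_coe_notMem_descSet hsucc hdesc

end Descents

theorem descSet_subset_singleton_iff {n₁ n₂ : ℕ} {σ : Equiv.Perm (Fin (n₁ + n₂))} :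
    descSet σ ⊆ {n₁} ↔ StrictMono (σ ∘ Fin.castAdd n₂) ∧ StrictMono (σ ∘ Fin.natAdd n₁) := by
  constructor
  · intro h
    refine ⟨strictMono_comp_of_notMem_descSet fun i j hij => ⟨by simp [hij], fun hj => ?_⟩,
      strictMono_comp_of_notMem_descSet fun i j hij => ⟨by simp [hij]; omega, fun hj => ?_⟩⟩
    all_goals
      have := Finset.mem_singleton.mp (h hj)
      simp only [Fin.val_castAdd, Fin.val_natAdd] at this
      omega
  · rintro ⟨h₁, h₂⟩ k hk
    obtain ⟨hk0, hkn⟩ : 0 < k ∧ k < n₁ + n₂ := Finset.mem_Ioo.mp (Finset.mem_filter.mp hk).1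
    have hdesc := (coe_mem_descSet_iff (σ := σ) (a := ⟨k - 1, by omega⟩) (b := ⟨k, hkn⟩)
      (by simp; omega)).mp hk
    rw [Finset.mem_singleton]
    by_contra hne
    rcases lt_or_gt_of_ne hne with hlt | hgt
    · exact (h₁ (show (⟨k - 1, by omega⟩ : Fin n₁) < ⟨k, hlt⟩ by simp; omega)).asymm hdesc
    · have ha : Fin.natAdd n₁ (⟨k - 1 - n₁, by omega⟩ : Fin n₂) = ⟨k - 1, by omega⟩ :=
        Fin.ext (by simp only [Fin.val_natAdd]; omega)
      have hb : Fin.natAdd n₁ (⟨k - n₁, by omega⟩ : Fin n₂) = ⟨k, hkn⟩ :=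
        Fin.ext (by simp only [Fin.val_natAdd]; omega)
      have := h₂ (show (⟨k - 1 - n₁, by omega⟩ : Fin n₂) < ⟨k - n₁, by omega⟩ by simp; omega)
      rw [Function.comp_apply, Function.comp_apply, ha, hb] at this
      exact this.asymm hdesc

def permSimplex {n : ℕ} (σ : Equiv.Perm (Fin n)) (t : ℝ) : Set (Fin n → ℝ) :=
  {w | w ∘ ⇑σ⁻¹ ∈ simplex n t}

def blockSimplex (n₁ n₂ : ℕ) (t : ℝ) : Set (Fin (n₁ + n₂) → ℝ) :=
  {w | w ∘ Fin.castAdd n₂ ∈ simplex n₁ t ∧ w ∘ Fin.natAdd n₁ ∈ simplex n₂ t}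

theorem isClosed_permSimplex {n : ℕ} (σ : Equiv.Perm (Fin n)) (t : ℝ) :
    IsClosed (permSimplex σ t) :=
  (isClosed_simplex n t).preimage (continuous_pi fun _ => continuous_apply _)

theorem eq_of_mem_permSimplex {n : ℕ} {t : ℝ} {w : Fin n → ℝ} (hw : Function.Injective w)
    {σ τ : Equiv.Perm (Fin n)} (hσ : w ∈ permSimplex σ t) (hτ : w ∈ permSimplex τ t) :
    σ = τ := by
  have h := Tuple.unique_monotone (fun _ _ hij => hσ.2 _ _ hij) (fun _ _ hij => hτ.2 _ _ hij)
  exact inv_injective (Equiv.ext fun i => hw (congrFun h i))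

section Shuffles

variable {n₁ n₂ : ℕ} {t : ℝ}

theorem blockSimplex_subset_Icc : blockSimplex n₁ n₂ t ⊆ Set.Icc 0 (fun _ => t) := by
  intro w hw
  simp only [Set.mem_Icc, Pi.le_def, Pi.zero_apply, ← forall_and]
  exact Fin.addCases (fun i => hw.1.1 i) (fun j => hw.2.1 j)

theorem permSimplex_subset_blockSimplex {σ : Equiv.Perm (Fin (n₁ + n₂))}
    (hσ : descSet σ ⊆ {n₁}) : permSimplex σ t ⊆ blockSimplex n₁ n₂ t := by
  obtain ⟨h₁, h₂⟩ := descSet_subset_singleton_iff.mp hσ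
  intro w hw
  have hw' : ∀ {m} (f : Fin m → Fin (n₁ + n₂)), w ∘ f = (w ∘ ⇑σ⁻¹) ∘ (σ ∘ f) := fun f => by
    ext; simp
  exact ⟨hw' _ ▸ comp_mem_simplex hw h₁.monotone, hw' _ ▸ comp_mem_simplex hw h₂.monotone⟩

theorem exists_mem_permSimplex {w : Fin (n₁ + n₂) → ℝ} (hw : w ∈ blockSimplex n₁ n₂ t)
    (hinj : Function.Injective w) :
    ∃ σ : Equiv.Perm (Fin (n₁ + n₂)), descSet σ ⊆ {n₁} ∧ w ∈ permSimplex σ t := by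
  set τ := Tuple.sort w
  have hsorted : StrictMono (w ∘ τ) :=
    (Tuple.monotone_sort w).strictMono_of_injective (hinj.comp τ.injective)
  -- `τ⁻¹` is strictly monotone wherever `w` is, because `w = (w ∘ τ) ∘ τ⁻¹`
  have hinv : ∀ {m} (f : Fin m → Fin (n₁ + n₂)), Monotone (w ∘ f) → Function.Injective f →
      StrictMono (⇑τ⁻¹ ∘ f) := fun f hf hfinj i j hij => by
    have := (hf.strictMono_of_injective (hinj.comp hfinj)) hij
    exact hsorted.lt_iff_lt.mp (by simpa using this)
  refine ⟨τ⁻¹, descSet_subset_singleton_iff.mpr ⟨hinv _ hw.1.2 (Fin.castAdd_injective _ _),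
    hinv _ hw.2.2 (Fin.natAdd_injective _ _)⟩, ?_⟩
  rw [permSimplex, Set.mem_ofPred_eq, inv_inv]
  exact ⟨fun i => ⟨(blockSimplex_subset_Icc hw).1 (τ i), (blockSimplex_subset_Icc hw).2 (τ i)⟩,
    fun _ _ hij => Tuple.monotone_sort w hij⟩

end Shuffles

theorem ae_injective (ι : Type*) [Fintype ι] : ∀ᵐ w : ι → ℝ, Function.Injective w := by
  classical
  have hdiag : ∀ i j : ι, i ≠ j → volume {w : ι → ℝ | w i = w j} = 0 := by
    intro i j hij
    let L : (ι → ℝ) →ₗ[ℝ] ℝ := LinearMap.proj (R := ℝ) (φ := fun _ : ι => ℝ) i - LinearMap.proj j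
    have hker : {w : ι → ℝ | w i = w j} = (LinearMap.ker L : Set (ι → ℝ)) := by
      ext w
      simp [L, sub_eq_zero]
    rw [hker]
    refine Measure.addHaar_submodule _ _ fun htop => ?_
    simpa [L, hij.symm] using LinearMap.congr_fun (LinearMap.ker_eq_top.mp htop) (Pi.single i 1)
  rw [ae_iff]
  refine measure_mono_null (fun w hw => ?_)
    (measure_iUnion_null fun i => measure_iUnion_null fun j =>
      measure_iUnion_null fun hij => hdiag i j hij)
  obtain ⟨i, j, hij, hne⟩ : ∃ i j, w i = w j ∧ i ≠ j := by
    simpa [Function.Injective] using hw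
  exact Set.mem_iUnion₂.mpr ⟨i, j, Set.mem_iUnion.mpr ⟨hne, hij⟩⟩

theorem setIntegral_comp_perm {ι E : Type*} [Fintype ι] [NormedAddCommGroup E] [NormedSpace ℝ E]
    (F : (ι → ℝ) → E) (σ : Equiv.Perm ι) (s : Set (ι → ℝ)) :
    ∫ u in s, F (u ∘ σ) = ∫ w in {w | w ∘ ⇑σ⁻¹ ∈ s}, F w := by
  let e : (ι → ℝ) ≃ᵐ (ι → ℝ) := MeasurableEquiv.arrowCongr' σ.symm (MeasurableEquiv.refl ℝ)
  have he : MeasurePreserving e := volume_preserving_arrowCongr' _ _ (MeasurePreserving.id _)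
  have hpre : e ⁻¹' {w | w ∘ ⇑σ⁻¹ ∈ s} = s := by
    ext u
    simp [e, Function.comp_def, MeasurableEquiv.arrowCongr', Equiv.arrowCongr']
  calc ∫ u in s, F (u ∘ σ) = ∫ u in e ⁻¹' {w | w ∘ ⇑σ⁻¹ ∈ s}, F (e u) := by rw [hpre]; rfl
    _ = _ := he.setIntegral_preimage_emb e.measurableEmbedding F _

section Decomposition

variable {n₁ n₂ : ℕ} {t : ℝ} {E : Type*} [NormedAddCommGroup E] [NormedSpace ℝ E]

theorem setIntegral_blockSimplex_eq_sum {F : (Fin (n₁ + n₂) → ℝ) → E}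
    (hF : IntegrableOn F (blockSimplex n₁ n₂ t)) :
    ∫ w in blockSimplex n₁ n₂ t, F w =
      ∑ σ ∈ Finset.univ.filter (fun σ : Equiv.Perm (Fin (n₁ + n₂)) => descSet σ ⊆ {n₁}),
        ∫ w in permSimplex σ t, F w := by
  let cell (σ : {σ : Equiv.Perm (Fin (n₁ + n₂)) // descSet σ ⊆ {n₁}}) := permSimplex σ.1 t
  have hnull : volume {w : Fin (n₁ + n₂) → ℝ | ¬Function.Injective w} = 0 :=
    ae_iff.mp (ae_injective _)
  have hunion : (⋃ σ, cell σ) ⊆ blockSimplex n₁ n₂ t :=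
    Set.iUnion_subset fun σ => permSimplex_subset_blockSimplex σ.2
  have hcover : (⋃ σ, cell σ) =ᵐ[volume] blockSimplex n₁ n₂ t := by
    refine ae_eq_set.mpr ⟨by simp [Set.sdiff_eq_empty.mpr hunion], measure_mono_null ?_ hnull⟩
    rintro w ⟨hw, hw'⟩ hinj
    obtain ⟨σ, hσ, hwσ⟩ := exists_mem_permSimplex hw hinj
    exact hw' (Set.mem_iUnion.mpr ⟨⟨σ, hσ⟩, hwσ⟩)
  have hdisj : Pairwise fun σ τ => AEDisjoint volume (cell σ) (cell τ) := fun σ τ hne =>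
    measure_mono_null (fun w hw hinj => hne (Subtype.ext (eq_of_mem_permSimplex hinj hw.1 hw.2)))
      hnull
  rw [← setIntegral_congr_set hcover,
    integral_iUnion_ae (fun σ => (isClosed_permSimplex _ t).measurableSet.nullMeasurableSet)
      hdisj (hF.mono_set hunion), tsum_fintype]
  exact (Finset.sum_subtype _ (fun _ => Finset.mem_filter_univ _)
    fun σ => ∫ w in permSimplex σ t, F w).symm

end Decomposition

section Append

variable {n₁ n₂ : ℕ}

noncomputable def appendMeasurableEquiv (n₁ n₂ : ℕ) :
    (Fin n₁ → ℝ) × (Fin n₂ → ℝ) ≃ᵐ (Fin (n₁ + n₂) → ℝ) :=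
  (MeasurableEquiv.sumPiEquivProdPi fun _ => ℝ).symm.trans
    (MeasurableEquiv.arrowCongr' finSumFinEquiv (MeasurableEquiv.refl ℝ))

theorem appendMeasurableEquiv_apply (p : (Fin n₁ → ℝ) × (Fin n₂ → ℝ)) :
    appendMeasurableEquiv n₁ n₂ p = Fin.append p.1 p.2 := by
  ext i
  refine Fin.addCases (fun i => ?_) (fun j => ?_) i <;>
    simp [appendMeasurableEquiv, MeasurableEquiv.arrowCongr', Equiv.arrowCongr',
      MeasurableEquiv.coe_sumPiEquivProdPi_symm, Equiv.sumPiEquivProdPi]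

theorem measurePreserving_appendMeasurableEquiv :
    MeasurePreserving (appendMeasurableEquiv n₁ n₂) (volume.prod volume) volume :=
  (volume_preserving_arrowCongr' _ _ (MeasurePreserving.id _)).comp
    (volume_measurePreserving_sumPiEquivProdPi_symm _)

theorem setIntegral_blockSimplex {E : Type*} [NormedAddCommGroup E] [NormedSpace ℝ E]
    (F : (Fin (n₁ + n₂) → ℝ) → E) (t : ℝ) :
    ∫ w in blockSimplex n₁ n₂ t, F w =
      ∫ p in simplex n₁ t ×ˢ simplex n₂ t, F (Fin.append p.1 p.2) ∂(volume.prod volume) := by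
  have hpre : appendMeasurableEquiv n₁ n₂ ⁻¹' blockSimplex n₁ n₂ t =
      simplex n₁ t ×ˢ simplex n₂ t := by
    ext p
    simp [blockSimplex, appendMeasurableEquiv_apply, Function.comp_def]
  rw [← hpre, ← measurePreserving_appendMeasurableEquiv.setIntegral_preimage_emb
    (appendMeasurableEquiv n₁ n₂).measurableEmbedding]
  simp only [appendMeasurableEquiv_apply]

end Append

theorem setIntegral_prod_mul_of_integrableOn {α β R : Type*} [MeasurableSpace α]
    [MeasurableSpace β] {μ : Measure α} {ν : Measure β} [SFinite μ] [SFinite ν] [NormedRing R]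
    [NormedSpace ℝ R] [IsScalarTower ℝ R R] [SMulCommClass ℝ R R] {f : α → R} {g : β → R}
    {s : Set α} {t : Set β} (hf : IntegrableOn f s μ) (hg : IntegrableOn g t ν) :
    ∫ p in s ×ˢ t, f p.1 * g p.2 ∂μ.prod ν = (∫ x in s, f x ∂μ) * ∫ y in t, g y ∂ν := by
  rw [← Measure.prod_restrict, integral_prod _ (hf.mul_prod hg)]
  simp_rw [integral_const_mul_of_integrable hg]
  exact integral_mul_const_of_integrable hf

section IteratedIntegrals

variable {R : Type*} [NormedRing R] [NormedAlgebra ℝ R]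

-- For `n = 0` this is an integral over the one-point space `Fin 0 → ℝ`, which would be the junk
-- value `0` if `R` were not complete.
theorem Hn_eq_setIntegral [CompleteSpace R] (H : ℝ → R) (n : ℕ) (t : ℝ) :
    Hn H n t = ∫ u in simplex n t, orderedProd H u := by
  cases n with
  | zero =>
    rw [volume_pi, Measure.pi_of_empty]
    simp [Hn, orderedProd, simplex]
  | succ n => rfl

theorem Hperm_eq_setIntegral (H : ℝ → R) {n : ℕ} (σ : Equiv.Perm (Fin n)) (t : ℝ) :
    Hperm H σ t = ∫ w in permSimplex σ t, orderedProd H w :=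
  setIntegral_comp_perm (orderedProd H) σ _

end IteratedIntegrals

theorem Hn_mul_Hn_general (H : ℝ → A) (hH : Continuous H) (t : ℝ)
    (n₁ n₂ : ℕ) :
    Hn H n₁ t * Hn H n₂ t =
      ∑ σ ∈ Finset.univ.filter
          (fun σ : Equiv.Perm (Fin (n₁ + n₂)) => descSet σ ⊆ {n₁}),
        Hperm H σ t := by
  have hint {n : ℕ} {s : Set (Fin n → ℝ)} (hs : s ⊆ Set.Icc 0 fun _ => t) :
      IntegrableOn (orderedProd H) s :=
    ((continuous_orderedProd hH n).continuousOn.integrableOn_compact isCompact_Icc).mono_set hs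
  rw [Hn_eq_setIntegral, Hn_eq_setIntegral, ← setIntegral_prod_mul_of_integrableOn
    (hint (simplex_subset_Icc n₁ t)) (hint (simplex_subset_Icc n₂ t))]
  simp_rw [← orderedProd_append, ← setIntegral_blockSimplex, Hperm_eq_setIntegral]
  exact setIntegral_blockSimplex_eq_sum (hint blockSimplex_subset_Icc)

/-- `H_{n₁}(t)·H_{n₂}(t) = Σ_{σ ∈ S_n, Desc(σ) ⊆ {n₁}} H_σ(t)`,
i.e. `H_{n₁} H_{n₂} = H_{D_{{n₁}}^{(n)}}` with `n = n₁ + n₂`. -/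
theorem Hn_mul_Hn (H : ℝ → A) (hH : Continuous H) (t : ℝ) (ht : 0 ≤ t)
    (n₁ n₂ : ℕ) (h₁ : 1 ≤ n₁) (h₂ : 1 ≤ n₂) :
    Hn H n₁ t * Hn H n₂ t =
      ∑ σ ∈ Finset.univ.filter
          (fun σ : Equiv.Perm (Fin (n₁ + n₂)) => descSet σ ⊆ {n₁}),
        Hperm H σ t :=
  Hn_mul_Hn_general H hH t n₁ n₂
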